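/- arXiv:1411.6172 — 2 statements merged into one kernel-verified Lean document; each statement's English description precedes it below -/
import Mathlib

section
/- For the wired (no interference) case, the broadcast capacity bound simplifies: if all β_e = 1 and all c_e = 1, then min over proper cuts U of ∑_{e∈E_U} c_e β_e equals min over single-node cuts U_v = V∖{v}, v ≠ r, of the same sum, which equals min_{v ≠ r} d_in(v), the minimum in-degree among non-root nodes — provided G is a DAG rooted at r in which every node is reachable from r. -/
/-!
In an acyclic graph every nonempty set of vertices has a vertex without predecessors inside it.
Applied to the complement of a proper cut `U ∋ r`, this gives a vertex `v ∉ U` all of whose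
in-edges leave `U`, so `d_in(v) ≤ |E_U|`. Conversely, a single-vertex cut `V ∖ {v}` is a proper cut,
and since there are no loops its crossing edges are exactly the in-edges of `v`.
-/

open Finset Relation

theorem Finite.wellFounded_of_acyclic {α : Type*} [Finite α] {R : α → α → Prop}
    (h : ∀ a, ¬ TransGen R a a) : WellFounded R :=
  have : IsTrans α (TransGen R) := ⟨fun _ _ _ => TransGen.trans⟩
  have : Std.Irrefl (TransGen R) := ⟨h⟩
  Subrelation.wf TransGen.single (Finite.wellFounded_of_trans_of_irrefl _)

namespace EdgeCut

variable {V ι : Type*} [Fintype ι] [DecidableEq V] (src tgt : ι → V)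

def cutEdges (U : Finset V) : Finset ι := univ.filter fun e => src e ∈ U ∧ tgt e ∉ U

def inEdges (v : V) : Finset ι := univ.filter fun e => tgt e = v

theorem cutEdges_erase_eq_inEdges [Fintype V] (hloop : ∀ e, src e ≠ tgt e) (v : V) :
    cutEdges src tgt (univ.erase v) = inEdges tgt v := by
  ext e
  simp only [cutEdges, inEdges, mem_filter, mem_univ, mem_erase, true_and, and_true, not_not]
  exact ⟨And.right, fun h => ⟨h ▸ hloop e, h⟩⟩

theorem exists_inEdges_subset_cutEdges
    (hwf : WellFounded fun a b => ∃ e, src e = a ∧ tgt e = b) {U : Finset V}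
    (hU : ∃ v, v ∉ U) : ∃ v ∉ U, inEdges tgt v ⊆ cutEdges src tgt U := by
  obtain ⟨v, hvU, hmin⟩ := hwf.has_min {x | x ∉ U} hU
  refine ⟨v, hvU, fun e he => ?_⟩
  simp only [cutEdges, inEdges, mem_filter, mem_univ, true_and] at he ⊢
  refine ⟨?_, he ▸ hvU⟩
  by_contra hsrc
  exact hmin (src e) hsrc ⟨e, rfl, he⟩

end EdgeCut

open EdgeCut in
theorem min_cut_eq_min_indegree_general {V : Type*} [Fintype V] [DecidableEq V]
    {ι : Type*} [Fintype ι]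
    (src tgt : ι → V) (r : V)
    (hacyc : ∀ v : V, ¬ Relation.TransGen (fun a b => ∃ e : ι, src e = a ∧ tgt e = b) v v)
    (cutVal : Finset V → ℕ)
    (hcut : ∀ U : Finset V,
      cutVal U = (Finset.univ.filter (fun e : ι => src e ∈ U ∧ tgt e ∉ U)).card)
    (din : V → ℕ) (hdin : ∀ v : V, din v = (Finset.univ.filter (fun e : ι => tgt e = v)).card) :
    sInf {c : ℕ | ∃ U : Finset V, r ∈ U ∧ U ≠ Finset.univ ∧ c = cutVal U}
      = sInf {c : ℕ | ∃ v : V, v ≠ r ∧ c = cutVal (Finset.univ.erase v)} ∧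
    sInf {c : ℕ | ∃ v : V, v ≠ r ∧ c = cutVal (Finset.univ.erase v)}
      = sInf {c : ℕ | ∃ v : V, v ≠ r ∧ c = din v} := by
  have hloop : ∀ e, src e ≠ tgt e := fun e h => hacyc _ (.single ⟨e, h, rfl⟩)
  have hsingle : ∀ v, cutVal (univ.erase v) = din v := fun v => by
    rw [hcut, hdin]
    exact congrArg card (cutEdges_erase_eq_inEdges src tgt hloop v)
  refine ⟨csInf_eq_csInf_of_forall_exists_le ?_ ?_, by simp only [hsingle]⟩
  · rintro _ ⟨U, hrU, hU, rfl⟩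
    obtain ⟨v, hvU, hsub⟩ := exists_inEdges_subset_cutEdges src tgt
      (Finite.wellFounded_of_acyclic hacyc) (by simpa [eq_univ_iff_forall] using hU)
    refine ⟨_, ⟨v, fun h => hvU (h ▸ hrU), rfl⟩, ?_⟩
    rw [hsingle, hdin, hcut]
    exact card_le_card hsub
  · rintro _ ⟨v, hvr, rfl⟩
    exact ⟨_, ⟨univ.erase v, mem_erase.2 ⟨Ne.symm hvr, mem_univ r⟩,
      (erase_ssubset (mem_univ v)).ne, rfl⟩, le_rfl⟩

theorem min_cut_eq_min_indegree {V : Type*} [Fintype V] [DecidableEq V]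
    {ι : Type*} [Fintype ι] [DecidableEq ι]
    (src tgt : ι → V) (r : V)
    (hacyc : ∀ v : V, ¬ Relation.TransGen (fun a b => ∃ e : ι, src e = a ∧ tgt e = b) v v)
    (hconn : ∀ v : V, Relation.ReflTransGen (fun a b => ∃ e : ι, src e = a ∧ tgt e = b) r v)
    (cutVal : Finset V → ℕ)
    (hcut : ∀ U : Finset V,
      cutVal U = (Finset.univ.filter (fun e : ι => src e ∈ U ∧ tgt e ∉ U)).card)
    (din : V → ℕ) (hdin : ∀ v : V, din v = (Finset.univ.filter (fun e : ι => tgt e = v)).card) :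
    sInf {c : ℕ | ∃ U : Finset V, r ∈ U ∧ U ≠ Finset.univ ∧ c = cutVal U}
      = sInf {c : ℕ | ∃ v : V, v ≠ r ∧ c = cutVal (Finset.univ.erase v)} ∧
    sInf {c : ℕ | ∃ v : V, v ≠ r ∧ c = cutVal (Finset.univ.erase v)}
      = sInf {c : ℕ | ∃ v : V, v ≠ r ∧ c = din v} :=
  min_cut_eq_min_indegree_general src tgt r hacyc cutVal hcut din hdin
end

section
/- In a finite DAG G rooted at r with unit-capacity edges (parallel edges allowed) in which every vertex is reachable from r, the maximum number of pairwise edge-disjoint spanning arborescences rooted at r equals min_{v ≠ r} d_in(v), the minimum in-degree over non-root vertices. -/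
/-- `F` (a set of edge indices) is a spanning arborescence rooted at `r`:
every vertex `v ≠ r` has exactly one incoming edge in `F`, and every vertex
is reachable from `r` using edges of `F`. -/
def IsArborescence {V : Type*} [Fintype V] [DecidableEq V]
    {ι : Type*} [Fintype ι] [DecidableEq ι]
    (src tgt : ι → V) (r : V) (F : Finset ι) : Prop :=
  (∀ v : V, v ≠ r → (F.filter (fun e => tgt e = v)).card = 1) ∧
  (∀ v : V, Relation.ReflTransGen (fun a b => ∃ e ∈ F, src e = a ∧ tgt e = b) r v)

theorem max_disjoint_arborescences_eq_min_indegree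
    {V : Type*} [Fintype V] [DecidableEq V]
    {ι : Type*} [Fintype ι] [DecidableEq ι]
    (src tgt : ι → V) (r : V)
    (hacyc : ∀ v : V, ¬ Relation.TransGen (fun a b => ∃ e : ι, src e = a ∧ tgt e = b) v v)
    (hconn : ∀ v : V, Relation.ReflTransGen (fun a b => ∃ e : ι, src e = a ∧ tgt e = b) r v)
    (hV : ∃ v : V, v ≠ r)
    (hne : (Finset.univ.erase r : Finset V).Nonempty) :
    IsGreatest
      {k : ℕ | ∃ F : Fin k → Finset ι,
        (∀ i, IsArborescence src tgt r (F i)) ∧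
        (∀ i j, i ≠ j → Disjoint (F i) (F j))}
      ((Finset.univ.erase r).inf' hne
        (fun v : V => (Finset.univ.filter (fun e : ι => tgt e = v)).card)) := by
  classical
  set k : ℕ := (Finset.univ.erase r).inf' hne
      (fun v : V => (Finset.univ.filter (fun e : ι => tgt e = v)).card) with hk
  -- well-foundedness of the edge relation
  have hwf : WellFounded (fun a b : V => ∃ e : ι, src e = a ∧ tgt e = b) := by
    have htg : WellFounded
        (Relation.TransGen fun a b : V => ∃ e : ι, src e = a ∧ tgt e = b) := by
      haveI : IsTrans V (Relation.TransGen fun a b : V => ∃ e : ι, src e = a ∧ tgt e = b) :=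
        ⟨fun _ _ _ => Relation.TransGen.trans⟩
      haveI : IsIrrefl V (Relation.TransGen fun a b : V => ∃ e : ι, src e = a ∧ tgt e = b) :=
        ⟨hacyc⟩
      exact Finite.wellFounded_of_trans_of_irrefl _
    exact Subrelation.wf (fun h => Relation.TransGen.single h) htg
  -- reachability lemma
  have reach : ∀ F : Finset ι,
      (∀ v : V, v ≠ r → (F.filter (fun e => tgt e = v)).card = 1) →
      ∀ v : V, Relation.ReflTransGen (fun a b => ∃ e ∈ F, src e = a ∧ tgt e = b) r v := by
    intro F hF v
    induction v using hwf.induction with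
    | _ v ih =>
      by_cases hv : v = r
      · subst hv; exact Relation.ReflTransGen.refl
      · obtain ⟨e, he⟩ := Finset.card_eq_one.mp (hF v hv)
        have heF : e ∈ F ∧ tgt e = v := by
          have : e ∈ F.filter (fun e => tgt e = v) := he ▸ Finset.mem_singleton_self e
          simpa using this
        have hsrc := ih (src e) ⟨e, rfl, heF.2⟩
        exact hsrc.tail ⟨e, heF.1, rfl, heF.2⟩
  constructor
  · -- membership: construct k disjoint arborescences
    have hkle : ∀ v ∈ Finset.univ.erase r,
        k ≤ (Finset.univ.filter (fun e : ι => tgt e = v)).card := fun v hv =>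
      Finset.inf'_le _ hv
    have hchoice : ∀ v ∈ Finset.univ.erase r,
        ∃ t ⊆ Finset.univ.filter (fun e : ι => tgt e = v), t.card = k := fun v hv =>
      Finset.exists_subset_card_eq (hkle v hv)
    choose S hSsub hScard using hchoice
    let f : ∀ v ∈ Finset.univ.erase r, Fin k → ι := fun v hv i =>
      (((S v hv).equivFinOfCardEq (hScard v hv)).symm i : ι)
    have hfmem : ∀ v hv i, f v hv i ∈ S v hv := fun v hv i =>
      (((S v hv).equivFinOfCardEq (hScard v hv)).symm i).2
    have hftgt : ∀ v hv i, tgt (f v hv i) = v := by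
      intro v hv i
      have := hSsub v hv (hfmem v hv i)
      simpa using this
    have hfinj : ∀ v hv, Function.Injective (f v hv) := by
      intro v hv i j hij
      have : ((S v hv).equivFinOfCardEq (hScard v hv)).symm i =
          ((S v hv).equivFinOfCardEq (hScard v hv)).symm j := Subtype.ext hij
      exact ((S v hv).equivFinOfCardEq (hScard v hv)).symm.injective this
    refine ⟨fun i => (Finset.univ.erase r).attach.image (fun v => f v.1 v.2 i), ?_, ?_⟩
    · intro i
      have hcard : ∀ v : V, v ≠ r →
          (((Finset.univ.erase r).attach.image (fun v => f v.1 v.2 i)).filter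
            (fun e => tgt e = v)).card = 1 := by
        intro v hv
        have hvmem : v ∈ Finset.univ.erase r := Finset.mem_erase.mpr ⟨hv, Finset.mem_univ v⟩
        have : ((Finset.univ.erase r).attach.image (fun w => f w.1 w.2 i)).filter
            (fun e => tgt e = v) = {f v hvmem i} := by
          ext e
          simp only [Finset.mem_filter, Finset.mem_image, Finset.mem_attach,
            Finset.mem_singleton, true_and]
          constructor
          · rintro ⟨⟨w, hfw⟩, hte⟩
            obtain ⟨hw, rfl⟩ := hfw
            have : w.1 = v := by rw [← hte, hftgt w.1 w.2 i]
            subst this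
            rfl
          · rintro rfl
            exact ⟨⟨⟨v, hvmem⟩, rfl⟩, hftgt v hvmem i⟩
        rw [this, Finset.card_singleton]
      exact ⟨hcard, reach _ hcard⟩
    · intro i j hij
      rw [Finset.disjoint_left]
      rintro e hei hej
      simp only [Finset.mem_image, Finset.mem_attach, true_and] at hei hej
      obtain ⟨⟨v, hv⟩, rfl⟩ := hei
      obtain ⟨⟨w, hw⟩, hwe⟩ := hej
      have hvw : w = v := by rw [← hftgt v hv i, ← hwe, hftgt w hw j]
      subst hvw
      exact hij (hfinj w hw (by rw [hwe])).symm
  · -- upper bound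
    rintro n ⟨F, hF, hdisj⟩
    refine Finset.le_inf' hne _ fun v hv => ?_
    have hvr : v ≠ r := (Finset.mem_erase.mp hv).1
    have hex : ∀ i : Fin n, ∃ e, (F i).filter (fun e => tgt e = v) = {e} := fun i =>
      Finset.card_eq_one.mp ((hF i).1 v hvr)
    choose g hg using hex
    have hgmem : ∀ i, g i ∈ (F i) ∧ tgt (g i) = v := by
      intro i
      have : g i ∈ (F i).filter (fun e => tgt e = v) := hg i ▸ Finset.mem_singleton_self _
      simpa using this
    have hginj : Function.Injective g := by
      intro i j hij
      by_contra hne'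
      exact Finset.disjoint_left.mp (hdisj i j hne') (hgmem i).1 (hij ▸ (hgmem j).1)
    calc n = (Finset.univ : Finset (Fin n)).card := by simp
      _ ≤ (Finset.univ.filter (fun e : ι => tgt e = v)).card :=
        Finset.card_le_card_of_injOn g
          (fun i _ => Finset.mem_filter.mpr ⟨Finset.mem_univ _, (hgmem i).2⟩)
          (fun i _ j _ h => hginj h)
end
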